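/- arXiv:2505.24131 — 6 statements merged into one kernel-verified Lean document; each statement's English description precedes it below -/
import Mathlib

section
/- Let n ≥ 3 be an integer, let 0 < m < (n-2)/n, η₀ > 0, ρ₁ > 0, let β be a real number with -ρ₁/2 < β < m·ρ₁/(n-2-n·m), and set α = (2β+ρ₁)/(1-m). Let r₀ > 0 and let f : [0,r₀) → ℝ be continuously differentiable on [0,r₀), twice continuously differentiable on (0,r₀), positive, satisfying (d²/dr²)(f(r)^m/m) + ((n-1)/r)·(d/dr)(f(r)^m/m) + α·f(r) + β·r·f'(r) = 0 for all 0 < r < r₀, with f(0) = η₀ and f'(0) = 0. Then f'(r) < 0 for all 0 < r < r₀. -/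
/-!
In divergence form the equation says that the flux `P = r^(n-1) (f^m/m)'` satisfies
`P' = -r^(n-1) (α f + β r f')`. Substituting `f' = r^(1-n) f^(1-m) P` in the last term turns this
into the linear equation `P' = -β r f^(1-m) P - α r^(n-1) f`, whose forcing term is negative
because `α > 0`. As `P(0) = 0` by `f'(0) = 0`, the integrating factor `exp (∫ β r f^(1-m))` shows
that `P`, and hence `f'`, is negative on `(0, r₀)`.
-/

open Set Filter

/-- The radial fast-diffusion self-similar ODE:
`(f^m/m)'' + ((n-1)/r)·(f^m/m)' + α·f + β·r·f' = 0` at the point `r`. -/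
def pmODE (n : ℕ) (m α β : ℝ) (f : ℝ → ℝ) (r : ℝ) : Prop :=
  deriv (deriv (fun u => f u ^ m / m)) r
    + (((n : ℝ) - 1) / r) * deriv (fun u => f u ^ m / m) r
    + α * f r + β * r * deriv f r = 0

open Real MeasureTheory in
theorem neg_of_hasDerivAt_lt_mul_self {P P' c : ℝ → ℝ} {a b : ℝ} (hab : a < b)
    (hP : ContinuousOn P (Icc a b)) (hc : ContinuousOn c (Icc a b)) (hPa : P a ≤ 0)
    (hP' : ∀ x ∈ Ioo a b, HasDerivAt P (P' x) x) (hlt : ∀ x ∈ Ioo a b, P' x < c x * P x) :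
    P b < 0 := by
  set C : ℝ → ℝ := fun x => ∫ t in a..x, c t
  have hC : ContinuousOn C (Icc a b) := by
    have := intervalIntegral.continuousOn_primitive_interval (μ := volume) (a := a) (b := b)
      (by rw [uIcc_of_le hab.le]; exact hc.integrableOn_Icc)
    rwa [uIcc_of_le hab.le] at this
  have hC' : ∀ x ∈ Ioo a b, HasDerivAt C (c x) x := fun x hx =>
    intervalIntegral.integral_hasDerivAt_right
      ((hc.mono (Icc_subset_Icc_right hx.2.le)).intervalIntegrable_of_Icc hx.1.le)
      ((hc.mono Ioo_subset_Icc_self).stronglyMeasurableAtFilter isOpen_Ioo x hx)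
      (hc.continuousAt (Icc_mem_nhds hx.1 hx.2))
  have hE : StrictAntiOn (fun x => P x * exp (-C x)) (Icc a b) := by
    refine strictAntiOn_of_deriv_neg (convex_Icc a b) (hP.mul hC.neg.rexp) fun x hx => ?_
    rw [interior_Icc] at hx
    have hd : HasDerivAt (fun x => P x * exp (-C x))
        (P' x * exp (-C x) + P x * (exp (-C x) * -c x)) x :=
      (hP' x hx).mul (hC' x hx).neg.exp
    rw [hd.deriv]
    have := mul_lt_mul_of_pos_right (sub_neg.2 (hlt x hx)) (exp_pos (-C x))
    linarith
  have hEb := hE (left_mem_Icc.2 hab.le) (right_mem_Icc.2 hab.le) hab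
  exact neg_of_mul_neg_left (hEb.trans_le (mul_nonpos_of_nonpos_of_nonneg hPa (exp_pos _).le))
    (exp_pos _).le

theorem HasDerivAt.pow_pred_mul {h : ℝ → ℝ} {h' r : ℝ} {n : ℕ} (hn : 1 ≤ n) (hr : r ≠ 0)
    (hh : HasDerivAt h h' r) :
    HasDerivAt (fun u => u ^ (n - 1) * h u) (r ^ (n - 1) * (h' + ((n : ℝ) - 1) / r * h r)) r := by
  obtain ⟨k, rfl⟩ := Nat.exists_eq_add_of_le' hn
  simp only [Nat.add_sub_cancel]
  refine ((hasDerivAt_pow k r).mul hh).congr_deriv ?_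
  rcases k with _ | k
  · simp
  · simp only [Nat.add_sub_cancel, Nat.cast_add, Nat.cast_one, pow_succ]
    field_simp
    ring

theorem hasDerivAt_rpow_div_self {f : ℝ → ℝ} {f' x m : ℝ} (hm : m ≠ 0) (hf : HasDerivAt f f' x)
    (hx : f x ≠ 0) : HasDerivAt (fun u => f u ^ m / m) (f x ^ (m - 1) * f') x :=
  ((hf.rpow_const (p := m) (Or.inl hx)).div_const m).congr_deriv (by field_simp)

theorem ContDiffOn.continuousOn_derivWithin_Ici {f : ℝ → ℝ} {a b : ℝ}
    (hf : ContDiffOn ℝ 1 f (Ico a b)) : ContinuousOn (derivWithin f (Ici a)) (Ico a b) :=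
  (hf.continuousOn_derivWithin (uniqueDiffOn_Ico a b) le_rfl).congr fun x hx => by
    rw [← Ici_inter_Iio, derivWithin_inter (Iio_mem_nhds hx.2)]

/-- `r^(n-1) (f^m/m)'(r)`, with the right derivative of `f` so that it makes sense at `r = 0`. -/
noncomputable def radialFlux (n : ℕ) (m : ℝ) (f : ℝ → ℝ) (r : ℝ) : ℝ :=
  r ^ (n - 1) * (f r ^ (m - 1) * derivWithin f (Ici 0) r)

section

variable {n : ℕ} {m r₀ : ℝ} {f : ℝ → ℝ}

theorem continuousOn_radialFlux (hf : ContDiffOn ℝ 1 f (Ico 0 r₀))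
    (hfpos : ∀ r ∈ Ico 0 r₀, 0 < f r) : ContinuousOn (radialFlux n m f) (Ico 0 r₀) :=
  (continuous_pow _).continuousOn.mul <|
    (hf.continuousOn.rpow_const fun x hx => Or.inl (hfpos x hx).ne').mul
      hf.continuousOn_derivWithin_Ici

theorem radialFlux_eq_deriv {r : ℝ} (hr : 0 < r) :
    radialFlux n m f r = r ^ (n - 1) * (f r ^ (m - 1) * deriv f r) := by
  rw [radialFlux, derivWithin_of_mem_nhds (Ici_mem_nhds hr)]

theorem hasDerivAt_radialFlux {α β : ℝ} (hn : 1 ≤ n) (hm : m ≠ 0)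
    (hf : ContDiffOn ℝ 2 f (Ioo 0 r₀)) (hfpos : ∀ r ∈ Ioo 0 r₀, 0 < f r)
    (hode : ∀ r ∈ Ioo 0 r₀, pmODE n m α β f r) {r : ℝ} (hr : r ∈ Ioo 0 r₀) :
    HasDerivAt (radialFlux n m f) (-(r ^ (n - 1) * (α * f r + β * r * deriv f r))) r := by
  set w : ℝ → ℝ := fun u => f u ^ m / m
  have hw : ∀ x ∈ Ioo 0 r₀, HasDerivAt w (f x ^ (m - 1) * deriv f x) x := fun x hx =>
    hasDerivAt_rpow_div_self hm
      ((hf.differentiableOn (by norm_num)).differentiableAt (isOpen_Ioo.mem_nhds hx)).hasDerivAt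
      (hfpos x hx).ne'
  have hw2 : ContDiffOn ℝ 2 w (Ioo 0 r₀) := fun x hx =>
    (((hf x hx).contDiffAt (isOpen_Ioo.mem_nhds hx)).rpow_const_of_ne
      (hfpos x hx).ne').div_const m |>.contDiffWithinAt
  have hw' : HasDerivAt (deriv w) (deriv (deriv w) r) r :=
    (((hw2.deriv_of_isOpen isOpen_Ioo (by norm_num)).differentiableOn one_ne_zero).differentiableAt
      (isOpen_Ioo.mem_nhds hr)).hasDerivAt
  have hflux : radialFlux n m f =ᶠ[nhds r] fun u => u ^ (n - 1) * deriv w u := by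
    filter_upwards [isOpen_Ioo.mem_nhds hr] with x hx
    rw [radialFlux_eq_deriv hx.1, (hw x hx).deriv]
  have h : deriv (deriv w) r + ((n : ℝ) - 1) / r * deriv w r + α * f r + β * r * deriv f r = 0 :=
    hode r hr
  refine ((hw'.pow_pred_mul hn hr.1.ne').congr_of_eventuallyEq hflux).congr_deriv ?_
  linear_combination r ^ (n - 1) * h

end

theorem local_f_derivative_negative_general {n : ℕ} (hn : 3 ≤ n) {m ρ₁ β α r₀ : ℝ}
    (hm0 : 0 < m) (hm1 : m < ((n : ℝ) - 2) / n)
    (hβ1 : -ρ₁ / 2 < β)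
    (hα : α = (2 * β + ρ₁) / (1 - m)) {f : ℝ → ℝ}
    (hf1 : ContDiffOn ℝ 1 f (Ico 0 r₀)) (hf2 : ContDiffOn ℝ 2 f (Ioo 0 r₀))
    (hfpos : ∀ r ∈ Ico (0 : ℝ) r₀, 0 < f r)
    (hode : ∀ r ∈ Ioo (0 : ℝ) r₀, pmODE n m α β f r)
    (hf0' : derivWithin f (Ici 0) 0 = 0) :
    ∀ r : ℝ, 0 < r → r < r₀ → deriv f r < 0 := by
  intro r hr hrr₀
  have hm_lt_one : m < 1 :=
    hm1.trans ((div_lt_one (by positivity)).2 (by linarith))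
  have hα_pos : 0 < α := hα ▸ div_pos (by linarith) (by linarith)
  have hIcc : Icc 0 r ⊆ Ico 0 r₀ := Icc_subset_Ico_right hrr₀
  have hIoo : ∀ x ∈ Ioo 0 r, x ∈ Ioo 0 r₀ := fun x hx => ⟨hx.1, hx.2.trans hrr₀⟩
  have hflux : radialFlux n m f r < 0 := by
    refine neg_of_hasDerivAt_lt_mul_self (c := fun x => -β * x / f x ^ (m - 1)) hr
      ((continuousOn_radialFlux hf1 hfpos).mono hIcc) ?_ (by simp [radialFlux, hf0'])
      (fun x hx => hasDerivAt_radialFlux (by omega) hm0.ne' hf2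
        (fun y hy => hfpos y (Ioo_subset_Ico_self hy)) hode (hIoo x hx)) fun x hx => ?_
    · exact (continuousOn_const.mul continuousOn_id).div
        ((hf1.continuousOn.mono hIcc).rpow_const fun y hy => Or.inl (hfpos y (hIcc hy)).ne')
        fun y hy => (Real.rpow_pos_of_pos (hfpos y (hIcc hy)) _).ne'
    · have hfx := hfpos x (Ioo_subset_Ico_self (hIoo x hx))
      rw [radialFlux_eq_deriv hx.1]
      field_simp
      nlinarith [mul_pos (mul_pos (pow_pos hx.1 (n - 1)) hfx) hα_pos]
  rw [radialFlux_eq_deriv hr] at hflux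
  exact neg_of_mul_neg_right (neg_of_mul_neg_right hflux (pow_pos hr _).le)
    (Real.rpow_pos_of_pos (hfpos r ⟨hr.le, hrr₀⟩) _).le

theorem local_f_derivative_negative {n : ℕ} (hn : 3 ≤ n) {m η₀ ρ₁ β α r₀ : ℝ}
    (hm0 : 0 < m) (hm1 : m < ((n : ℝ) - 2) / n) (hη₀ : 0 < η₀) (hρ₁ : 0 < ρ₁)
    (hβ1 : -ρ₁ / 2 < β) (hβ2 : β < m * ρ₁ / ((n : ℝ) - 2 - n * m))
    (hα : α = (2 * β + ρ₁) / (1 - m)) (hr₀ : 0 < r₀) {f : ℝ → ℝ}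
    (hf1 : ContDiffOn ℝ 1 f (Ico 0 r₀)) (hf2 : ContDiffOn ℝ 2 f (Ioo 0 r₀))
    (hfpos : ∀ r ∈ Ico (0 : ℝ) r₀, 0 < f r)
    (hode : ∀ r ∈ Ioo (0 : ℝ) r₀, pmODE n m α β f r)
    (hf0 : f 0 = η₀) (hf0' : derivWithin f (Ici 0) 0 = 0) :
    ∀ r : ℝ, 0 < r → r < r₀ → deriv f r < 0 :=
  local_f_derivative_negative_general hn hm0 hm1 hβ1 hα hf1 hf2 hfpos hode hf0'
end

section
/- Let n ≥ 3 be an integer, let 0 < m < (n-2)/n, η₀ > 0, ρ₁ > 0, let β be a real number with -ρ₁/2 < β < m·ρ₁/(n-2-n·m), and set α = (2β+ρ₁)/(1-m). Let r₀ > 0 and let f : [0,r₀) → ℝ be continuously differentiable on [0,r₀), twice continuously differentiable on (0,r₀), positive, satisfying (d²/dr²)(f(r)^m/m) + ((n-1)/r)·(d/dr)(f(r)^m/m) + α·f(r) + β·r·f'(r) = 0 for all 0 < r < r₀, with f(0) = η₀ and f'(0) = 0. Then for every 0 < r < r₀ one has r^{n-1}·f(r)^{m-1}·f'(r) + (α -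 n·β)·∫₀^r ρ^{n-1}·f(ρ) dρ + β·r^n·f(r) = 0; equivalently, f'(r) = -(α - n·β)·(f(r)^{1-m}/r^{n-1})·∫₀^r ρ^{n-1}·f(ρ) dρ - β·r·f(r)^{2-m} for all 0 < r < r₀. -/
open Set Filter

/-!
Multiplying the equation by `r^(n-1)` makes it exact: with `g = f^m/m`, the function
`H r = r^(n-1) g' r + (α - nβ) ∫₀^r ρ^(n-1) f ρ dρ + β r^n f r` has derivative
`r^(n-1) (g'' + (n-1)/r g' + α f + β r f')`, which vanishes. So `H` is constant on `(0, r₀)`.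
Since `f` is `C¹` and positive up to `r = 0`, `g' = f^(m-1) f'` stays bounded there, and
as `n ≥ 2` every term of `H` tends to `0` when `r → 0⁺`; hence `H = 0`. Solving for `f'` gives
the second form.
-/

open Topology intervalIntegral

section Primitive

variable {φ : ℝ → ℝ} {a b x : ℝ}

theorem hasDerivAt_primitive_of_continuousOn_Ico (hφ : ContinuousOn φ (Ico a b))
    (hx : x ∈ Ioo a b) : HasDerivAt (fun u => ∫ t in a..u, φ t) (φ x) x :=
  integral_hasDerivAt_right
    ((hφ.mono (Icc_subset_Ico_right hx.2)).intervalIntegrable_of_Icc hx.1.le)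
    ((hφ.mono Ioo_subset_Ico_self).stronglyMeasurableAtFilter isOpen_Ioo x hx)
    (hφ.continuousAt (Ico_mem_nhds hx.1 hx.2))

theorem continuousWithinAt_primitive_of_continuousOn_Ico (hφ : ContinuousOn φ (Ico a b))
    (hab : a < b) : ContinuousWithinAt (fun u => ∫ t in a..u, φ t) (Ico a b) a := by
  obtain ⟨c, hac, hcb⟩ := exists_between hab
  have h : ContinuousWithinAt (fun u => ∫ t in a..u, φ t) (Icc a c) a :=
    continuousWithinAt_primitive (by simp)
      (by simpa [hac.le] using
        (hφ.mono (Icc_subset_Ico_right hcb)).intervalIntegrable_of_Icc hac.le)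
  rwa [ContinuousWithinAt, nhdsWithin_Icc_eq_nhdsGE hac, ← nhdsWithin_Ico_eq_nhdsGE hab] at h

end Primitive

theorem eqOn_zero_of_hasDerivAt_zero_of_tendsto {H : ℝ → ℝ} {a b : ℝ}
    (hH : ∀ x ∈ Ioo a b, HasDerivAt H 0 x) (hlim : Tendsto H (𝓝[>] a) (𝓝 0)) :
    EqOn H 0 (Ioo a b) := by
  intro x hx
  have hconst : ∀ y ∈ Ioo a b, H y = H x := fun y hy =>
    isOpen_Ioo.is_const_of_deriv_eq_zero isPreconnected_Ioo
      (fun z hz => (hH z hz).differentiableAt.differentiableWithinAt)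
      (fun z hz => (hH z hz).deriv) hy hx
  have hev : H =ᶠ[𝓝[>] a] fun _ => H x :=
    eventually_of_mem (Ioo_mem_nhdsGT (hx.1.trans hx.2)) hconst
  exact tendsto_nhds_unique (hlim.congr' hev) tendsto_const_nhds |>.symm

theorem HasDerivAt.rpow_const_div {f : ℝ → ℝ} {f' m x : ℝ} (hf : HasDerivAt f f' x)
    (hfx : 0 < f x) (hm : m ≠ 0) :
    HasDerivAt (fun u => f u ^ m / m) (f x ^ (m - 1) * f') x :=
  ((hf.rpow_const (p := m) (Or.inl hfx.ne')).div_const m).congr_deriv (by field_simp)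

noncomputable def pmFirstIntegral (n : ℕ) (m α β : ℝ) (f : ℝ → ℝ) (x : ℝ) : ℝ :=
  x ^ ((n : ℝ) - 1) * deriv (fun u => f u ^ m / m) x
    + (α - n * β) * (∫ ρ in (0 : ℝ)..x, ρ ^ ((n : ℝ) - 1) * f ρ)
    + β * x ^ (n : ℝ) * f x

section FirstIntegral

variable {n : ℕ} {m α β b r : ℝ} {f : ℝ → ℝ}

theorem hasDerivAt_pmFirstIntegral (hr : 0 < r) (hf : DifferentiableAt ℝ f r)
    (hg : DifferentiableAt ℝ (deriv fun u => f u ^ m / m) r)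
    (hI : HasDerivAt (fun u => ∫ ρ in (0 : ℝ)..u, ρ ^ ((n : ℝ) - 1) * f ρ)
      (r ^ ((n : ℝ) - 1) * f r) r)
    (hode : pmODE n m α β f r) : HasDerivAt (pmFirstIntegral n m α β f) 0 r := by
  have hpow : ∀ p : ℝ, HasDerivAt (fun u : ℝ => u ^ p) (p * r ^ (p - 1)) r := fun p =>
    Real.hasDerivAt_rpow_const (Or.inl hr.ne')
  refine ((((hpow _).mul hg.hasDerivAt).add (hI.const_mul (α - n * β))).add
    (((hpow _).const_mul β).mul hf.hasDerivAt)).congr_deriv ?_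
  have hrn : r ^ (n : ℝ) = r ^ ((n : ℝ) - 1) * r := by
    rw [Real.rpow_sub_one hr.ne', div_mul_cancel₀ _ hr.ne']
  rw [Real.rpow_sub_one hr.ne' ((n : ℝ) - 1), hrn]
  unfold pmODE at hode
  linear_combination r ^ ((n : ℝ) - 1) * hode

theorem tendsto_pmFirstIntegral_nhdsGT_zero (hn : 2 ≤ n) (hm : m ≠ 0) (hb : 0 < b)
    (hf : ContDiffOn ℝ 1 f (Ico 0 b)) (hpos : ∀ x ∈ Ico 0 b, 0 < f x) :
    Tendsto (pmFirstIntegral n m α β f) (𝓝[>] 0) (𝓝 0) := by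
  set f' := derivWithin f (Ico 0 b)
  -- `K` is `pmFirstIntegral` with `g'` written as `f^(m-1) f'`, which makes sense at `0` too.
  set K : ℝ → ℝ := fun x => x ^ ((n : ℝ) - 1) * (f x ^ (m - 1) * f' x)
    + (α - n * β) * (∫ ρ in (0 : ℝ)..x, ρ ^ ((n : ℝ) - 1) * f ρ)
    + β * x ^ (n : ℝ) * f x
  have hn1 : (1 : ℝ) < n := by exact_mod_cast hn
  have h0 : (0 : ℝ) ∈ Ico 0 b := ⟨le_rfl, hb⟩
  have hfc := hf.continuousOn
  have hpow : ∀ p : ℝ, 0 ≤ p → Continuous fun x : ℝ => x ^ p := fun p hp =>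
    Real.continuous_rpow_const hp
  have hK : ContinuousWithinAt K (Ico 0 b) 0 :=
    (((hpow _ (by linarith)).continuousWithinAt.mul
      (((hfc 0 h0).rpow_const (Or.inl (hpos 0 h0).ne')).mul
        (hf.continuousOn_derivWithin (uniqueDiffOn_Ico 0 b) le_rfl 0 h0))).add
      ((continuousWithinAt_primitive_of_continuousOn_Ico
        ((hpow _ (by linarith)).continuousOn.mul hfc) hb).const_mul _)).add
      (((hpow _ (by linarith)).continuousWithinAt.const_mul β).mul (hfc 0 h0))
  have hK0 : K 0 = 0 := by
    simp [K, Real.zero_rpow (by linarith : (n : ℝ) - 1 ≠ 0), show n ≠ 0 by omega]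
  have hKf : K =ᶠ[𝓝[>] 0] pmFirstIntegral n m α β f := by
    filter_upwards [Ioo_mem_nhdsGT hb] with x hx
    have hfx : HasDerivAt f (f' x) x :=
      (hf.differentiableOn one_ne_zero x ⟨hx.1.le, hx.2⟩).hasDerivWithinAt.hasDerivAt
        (Ico_mem_nhds hx.1 hx.2)
    simp only [K, pmFirstIntegral, (hfx.rpow_const_div (hpos x ⟨hx.1.le, hx.2⟩) hm).deriv,
      mul_assoc]
  have hle : 𝓝[>] (0 : ℝ) ≤ 𝓝[Ico 0 b] 0 := by
    rw [nhdsWithin_Ico_eq_nhdsGE hb]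
    exact nhdsWithin_mono _ Ioi_subset_Ici_self
  have hKlim := hK.tendsto.mono_left hle
  rw [hK0] at hKlim
  exact hKlim.congr' hKf

theorem pmFirstIntegral_eqOn_zero (hn : 2 ≤ n) (hm : m ≠ 0)
    (hf1 : ContDiffOn ℝ 1 f (Ico 0 b)) (hf2 : ContDiffOn ℝ 2 f (Ioo 0 b))
    (hpos : ∀ x ∈ Ico 0 b, 0 < f x) (hode : ∀ x ∈ Ioo 0 b, pmODE n m α β f x) :
    EqOn (pmFirstIntegral n m α β f) 0 (Ioo 0 b) := by
  intro r hr
  refine eqOn_zero_of_hasDerivAt_zero_of_tendsto (fun x hx => ?_)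
    (tendsto_pmFirstIntegral_nhdsGT_zero hn hm (hr.1.trans hr.2) hf1 hpos) hr
  have hx_nhds : Ioo 0 b ∈ 𝓝 x := isOpen_Ioo.mem_nhds hx
  have hg : ContDiffOn ℝ 2 (fun u => f u ^ m / m) (Ioo 0 b) :=
    (hf2.rpow_const_of_ne fun y hy => (hpos y ⟨hy.1.le, hy.2⟩).ne').div_const m
  have hn1 : (0 : ℝ) ≤ n - 1 := by
    have : (2 : ℝ) ≤ n := by exact_mod_cast hn
    linarith
  refine hasDerivAt_pmFirstIntegral hx.1
    ((hf2.differentiableOn two_ne_zero x hx).differentiableAt hx_nhds)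
    (((hg.deriv_of_isOpen isOpen_Ioo le_rfl).differentiableOn one_ne_zero x hx).differentiableAt
      hx_nhds)
    (hasDerivAt_primitive_of_continuousOn_Ico
      ((Real.continuous_rpow_const hn1).continuousOn.mul hf1.continuousOn) hx)
    (hode x hx)

end FirstIntegral

theorem deriv_eq_of_integral_identity {n : ℕ} {m α β r I : ℝ} {f : ℝ → ℝ} (hr : 0 < r)
    (hfr : 0 < f r)
    (h : r ^ ((n : ℝ) - 1) * f r ^ (m - 1) * deriv f r + (α - n * β) * I
      + β * r ^ (n : ℝ) * f r = 0) :
    deriv f r = -(α - n * β) * (f r ^ (1 - m) / r ^ ((n : ℝ) - 1)) * I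
      - β * r * f r ^ (2 - m) := by
  have hrn : r ^ (n : ℝ) = r ^ ((n : ℝ) - 1) * r := by
    rw [Real.rpow_sub_one hr.ne', div_mul_cancel₀ _ hr.ne']
  have hinv : f r ^ (m - 1) * f r ^ (1 - m) = 1 := by
    rw [← Real.rpow_add hfr, sub_add_sub_cancel, sub_self, Real.rpow_zero]
  have h2m : f r ^ (2 - m) = f r * f r ^ (1 - m) := by
    rw [show 2 - m = 1 + (1 - m) by ring, Real.rpow_add hfr, Real.rpow_one]
  rw [hrn] at h
  rw [h2m]
  field_simp
  linear_combination f r ^ (1 - m) * h - r ^ ((n : ℝ) - 1) * deriv f r * hinv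

theorem integral_representation_general {n : ℕ} (hn : 3 ≤ n) {m β α r₀ : ℝ}
    (hm0 : 0 < m) {f : ℝ → ℝ}
    (hf1 : ContDiffOn ℝ 1 f (Ico 0 r₀)) (hf2 : ContDiffOn ℝ 2 f (Ioo 0 r₀))
    (hfpos : ∀ r ∈ Ico (0 : ℝ) r₀, 0 < f r)
    (hode : ∀ r ∈ Ioo (0 : ℝ) r₀, pmODE n m α β f r) :
    ∀ r : ℝ, 0 < r → r < r₀ →
      (r ^ ((n : ℝ) - 1) * f r ^ (m - 1) * deriv f r
        + (α - n * β) * (∫ ρ in (0 : ℝ)..r, ρ ^ ((n : ℝ) - 1) * f ρ)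
        + β * r ^ (n : ℝ) * f r = 0) ∧
      deriv f r = -(α - n * β) * (f r ^ (1 - m) / r ^ ((n : ℝ) - 1))
          * (∫ ρ in (0 : ℝ)..r, ρ ^ ((n : ℝ) - 1) * f ρ)
        - β * r * f r ^ (2 - m) := by
  intro r hr hrr₀
  have hfr : 0 < f r := hfpos r ⟨hr.le, hrr₀⟩
  have hH : pmFirstIntegral n m α β f r = 0 :=
    pmFirstIntegral_eqOn_zero (by omega) hm0.ne' hf1 hf2 hfpos hode ⟨hr, hrr₀⟩
  have hfd : HasDerivAt f (deriv f r) r :=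
    ((hf2.differentiableOn two_ne_zero r ⟨hr, hrr₀⟩).differentiableAt
      (Ioo_mem_nhds hr hrr₀)).hasDerivAt
  rw [pmFirstIntegral, (hfd.rpow_const_div hfr hm0.ne').deriv, ← mul_assoc] at hH
  exact ⟨hH, deriv_eq_of_integral_identity hr hfr hH⟩

theorem integral_representation {n : ℕ} (hn : 3 ≤ n) {m η₀ ρ₁ β α r₀ : ℝ}
    (hm0 : 0 < m) (hm1 : m < ((n : ℝ) - 2) / n) (hη₀ : 0 < η₀) (hρ₁ : 0 < ρ₁)
    (hβ1 : -ρ₁ / 2 < β) (hβ2 : β < m * ρ₁ / ((n : ℝ) - 2 - n * m))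
    (hα : α = (2 * β + ρ₁) / (1 - m)) (hr₀ : 0 < r₀) {f : ℝ → ℝ}
    (hf1 : ContDiffOn ℝ 1 f (Ico 0 r₀)) (hf2 : ContDiffOn ℝ 2 f (Ioo 0 r₀))
    (hfpos : ∀ r ∈ Ico (0 : ℝ) r₀, 0 < f r)
    (hode : ∀ r ∈ Ioo (0 : ℝ) r₀, pmODE n m α β f r)
    (hf0 : f 0 = η₀) (hf0' : derivWithin f (Ici 0) 0 = 0) :
    ∀ r : ℝ, 0 < r → r < r₀ →
      (r ^ ((n : ℝ) - 1) * f r ^ (m - 1) * deriv f r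
        + (α - n * β) * (∫ ρ in (0 : ℝ)..r, ρ ^ ((n : ℝ) - 1) * f ρ)
        + β * r ^ (n : ℝ) * f r = 0) ∧
      deriv f r = -(α - n * β) * (f r ^ (1 - m) / r ^ ((n : ℝ) - 1))
          * (∫ ρ in (0 : ℝ)..r, ρ ^ ((n : ℝ) - 1) * f ρ)
        - β * r * f r ^ (2 - m) :=
  integral_representation_general hn hm0 hf1 hf2 hfpos hode
end

section
/- Let n ≥ 3 be an integer, let 0 < m < (n-2)/n and let α, β, α̃, β̃ be real numbers with β̃ = -β and α̃ = α - ((n-2)/m)·β. Let f be a positive twice continuously differentiable function on (0,∞) and define g(r) = r^{-(n-2)/m}·f(1/r) for r > 0. Then f satisfies (d²/dr²)(f(r)^m/m) + ((n-1)/r)·(d/dr)(f(r)^m/m) + α·f(r) + β·r·f'(r) = 0 for all r > 0 if and only if g satisfies (d²/dr²)(g(r)^m/m) + ((n-1)/r)·(d/dr)(g(r)^m/m) + r^{(n-2-n·m)/m - 2}·(α̃·g(r) + β̃·r·g'(r)) = 0 for all r > 0. -/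
/-!
Inversion is the radial form of the Kelvin transform: in dimension `d`, the function
`x ↦ x ^ (2 - d) * u (1/x)` has radial Laplacian `r ^ (-d - 2) * (Δu)(1/r)`. For `n = d` and
`γ = (n - 2)/m`, `g ^ m / m` is the Kelvin transform of `f ^ m / m`, so the diffusion terms of the
two equations agree up to the factor `r ^ (-n - 2)`. For the first-order terms,
`r g'(r) = -r ^ (-γ) (γ f(s) + s f'(s))` at `s = 1/r`, and `α̃ = α - γβ`, `β̃ = -β` are exactly
what makes `α̃ g + β̃ r g'` equal to `r ^ (-γ) (α f + β s f')(s)`. Hence each equation at `r` is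
the other one at `1/r`, multiplied by `r ^ (-n - 2)`.
-/

open Set Filter

/-- The inverted ODE:
`(g^m/m)'' + ((n-1)/r)·(g^m/m)' + r^{(n-2-nm)/m - 2}·(α̃·g + β̃·r·g') = 0` at the point `r`. -/
def invODE (n : ℕ) (m αt βt : ℝ) (g : ℝ → ℝ) (r : ℝ) : Prop :=
  deriv (deriv (fun u => g u ^ m / m)) r
    + (((n : ℝ) - 1) / r) * deriv (fun u => g u ^ m / m) r
    + r ^ (((n : ℝ) - 2 - n * m) / m - 2) * (αt * g r + βt * r * deriv g r) = 0

open Topology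

noncomputable def rpowInversion (γ : ℝ) (f : ℝ → ℝ) (x : ℝ) : ℝ := x ^ (-γ) * f x⁻¹

noncomputable def eulerOp (γ : ℝ) (f : ℝ → ℝ) (s : ℝ) : ℝ := γ * f s + s * deriv f s

noncomputable def radialLaplacian (d : ℝ) (u : ℝ → ℝ) (r : ℝ) : ℝ :=
  deriv (deriv u) r + ((d - 1) / r) * deriv u r

theorem Filter.EventuallyEq.radialLaplacian_eq {d r : ℝ} {u v : ℝ → ℝ} (h : u =ᶠ[𝓝 r] v) :
    radialLaplacian d u r = radialLaplacian d v r := by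
  rw [radialLaplacian, radialLaplacian, h.deriv.deriv_eq, h.deriv_eq]

theorem hasDerivAt_eulerOp {γ s : ℝ} {f : ℝ → ℝ} (hf : DifferentiableAt ℝ f s)
    (hf' : DifferentiableAt ℝ (deriv f) s) :
    HasDerivAt (eulerOp γ f) ((γ + 1) * deriv f s + s * deriv (deriv f) s) s :=
  ((hf.hasDerivAt.const_mul γ).add ((hasDerivAt_id' s).mul hf'.hasDerivAt)).congr_deriv
    (by ring)

theorem ContDiffOn.differentiableAt_deriv {f : ℝ → ℝ} {s : Set ℝ} {x : ℝ}
    (hf : ContDiffOn ℝ 2 f s) (hs : IsOpen s) (hx : x ∈ s) :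
    DifferentiableAt ℝ (deriv f) x :=
  ((hf.deriv_of_isOpen hs (m := 1) (by norm_num)).differentiableOn one_ne_zero).differentiableAt
    (hs.mem_nhds hx)

section Inversion

variable {γ r : ℝ} {f : ℝ → ℝ}

theorem hasDerivAt_rpowInversion (hr : 0 < r) (hf : DifferentiableAt ℝ f r⁻¹) :
    HasDerivAt (rpowInversion γ f) (-rpowInversion (γ + 1) (eulerOp γ f) r) r := by
  have hpow : HasDerivAt (fun x : ℝ => x ^ (-γ)) (-γ * r ^ (-γ - 1)) r :=
    Real.hasDerivAt_rpow_const (Or.inl hr.ne')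
  have hcomp : HasDerivAt (fun x : ℝ => f x⁻¹) (deriv f r⁻¹ * -(r ^ 2)⁻¹) r :=
    hf.hasDerivAt.comp r (hasDerivAt_inv hr.ne')
  refine (hpow.mul hcomp).congr_deriv ?_
  simp only [rpowInversion, eulerOp, neg_add', Real.rpow_sub_one hr.ne']
  field_simp
  ring

theorem deriv_rpowInversion_eventuallyEq (hr : 0 < r)
    (hf : ∀ᶠ s in 𝓝 r⁻¹, DifferentiableAt ℝ f s) :
    deriv (rpowInversion γ f) =ᶠ[𝓝 r] -rpowInversion (γ + 1) (eulerOp γ f) := by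
  have hinv : ∀ᶠ x in 𝓝 r, DifferentiableAt ℝ f x⁻¹ :=
    (continuousAt_inv₀ hr.ne').tendsto.eventually hf
  filter_upwards [hinv, Ioi_mem_nhds hr] with x hx hxpos
  exact (hasDerivAt_rpowInversion hxpos hx).deriv

theorem lowerOrder_rpowInversion (α β : ℝ) (hr : 0 < r) (hf : DifferentiableAt ℝ f r⁻¹) :
    (α - γ * β) * rpowInversion γ f r + -β * r * deriv (rpowInversion γ f) r
      = r ^ (-γ) * (α * f r⁻¹ + β * r⁻¹ * deriv f r⁻¹) := by
  rw [(hasDerivAt_rpowInversion hr hf).deriv]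
  simp only [rpowInversion, eulerOp, neg_add', Real.rpow_sub_one hr.ne']
  field_simp
  ring

theorem rpowInversion_rpow_div (hr : 0 < r) (hf : 0 ≤ f r⁻¹) (p : ℝ) :
    rpowInversion γ f r ^ p / p = rpowInversion (γ * p) (fun s => f s ^ p / p) r := by
  rw [rpowInversion, rpowInversion, Real.mul_rpow (Real.rpow_nonneg hr.le _) hf,
    ← Real.rpow_mul hr.le, neg_mul, mul_div_assoc]

theorem radialLaplacian_rpowInversion {d : ℝ} (hr : 0 < r)
    (hf : ∀ᶠ s in 𝓝 r⁻¹, DifferentiableAt ℝ f s)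
    (hf' : DifferentiableAt ℝ (deriv f) r⁻¹) :
    radialLaplacian d (rpowInversion (d - 2) f) r
      = r ^ (-d - 2) * radialLaplacian d f r⁻¹ := by
  have hE := hasDerivAt_eulerOp (γ := d - 2) hf.self_of_nhds hf'
  have h2 : deriv (deriv (rpowInversion (d - 2) f)) r
      = rpowInversion (d - 2 + 1 + 1) (eulerOp (d - 2 + 1) (eulerOp (d - 2) f)) r := by
    rw [(deriv_rpowInversion_eventuallyEq hr hf).deriv_eq, deriv.neg,
      (hasDerivAt_rpowInversion hr hE.differentiableAt).deriv, neg_neg]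
  rw [radialLaplacian, radialLaplacian, h2,
    (hasDerivAt_rpowInversion hr hf.self_of_nhds).deriv]
  simp only [rpowInversion, eulerOp, hE.deriv]
  have e1 : r ^ (-(d - 2 + 1)) = r ^ (-d) * r := by
    rw [show -(d - 2 + 1) = -d + 1 by ring, Real.rpow_add hr, Real.rpow_one]
  have e2 : r ^ (-d - 2) = r ^ (-d) * r⁻¹ ^ 2 := by
    rw [Real.rpow_sub hr, Real.rpow_two, div_eq_mul_inv, inv_pow]
  rw [show -(d - 2 + 1 + 1) = -d by ring, e1, e2]
  field_simp
  ring

end Inversion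

theorem invODE_iff_pmODE_inv {n : ℕ} {m α β : ℝ} (hm : m ≠ 0) {f g : ℝ → ℝ}
    (hf2 : ContDiffOn ℝ 2 f (Ioi 0)) (hfpos : ∀ r ∈ Ioi (0 : ℝ), 0 < f r)
    (hg : ∀ r > (0 : ℝ), g r = r ^ (-(((n : ℝ) - 2) / m)) * f (1 / r))
    {r : ℝ} (hr : 0 < r) :
    invODE n m (α - (((n : ℝ) - 2) / m) * β) (-β) g r ↔ pmODE n m α β f r⁻¹ := by
  set γ := ((n : ℝ) - 2) / m with hγ_def
  set U : ℝ → ℝ := fun s => f s ^ m / m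
  have hr' : r⁻¹ ∈ Ioi (0 : ℝ) := inv_pos.2 hr
  have hg_eq : g =ᶠ[𝓝 r] rpowInversion γ f :=
    eventually_of_mem (Ioi_mem_nhds hr) fun x hx => by rw [hg x hx, one_div, rpowInversion]
  have hgU_eq : (fun u => g u ^ m / m) =ᶠ[𝓝 r] rpowInversion (n - 2) U := by
    filter_upwards [hg_eq, Ioi_mem_nhds hr] with x hx hxpos
    rw [hx, rpowInversion_rpow_div hxpos (hfpos _ (mem_Ioi.2 (inv_pos.2 hxpos))).le,
      hγ_def, div_mul_cancel₀ _ hm]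
  have hU2 : ContDiffOn ℝ 2 U (Ioi 0) :=
    (hf2.rpow_const_of_ne fun s hs => (hfpos s hs).ne').div_const m
  have hU : ∀ᶠ s in 𝓝 r⁻¹, DifferentiableAt ℝ U s :=
    eventually_of_mem (Ioi_mem_nhds hr') fun s hs =>
      (hU2.differentiableOn (by norm_num)).differentiableAt (Ioi_mem_nhds hs)
  have hf : DifferentiableAt ℝ f r⁻¹ :=
    (hf2.differentiableOn (by norm_num)).differentiableAt (Ioi_mem_nhds hr')
  have hexp : r ^ (((n : ℝ) - 2 - n * m) / m - 2) = r ^ (-(n : ℝ) - 2) * r ^ γ := by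
    rw [← Real.rpow_add hr, hγ_def]
    congr 1
    field_simp
    ring
  have hγ : r ^ γ * r ^ (-γ) = 1 := by
    rw [← Real.rpow_add hr, add_neg_cancel, Real.rpow_zero]
  unfold invODE pmODE
  rw [hg_eq.deriv_eq, hg_eq.eq_of_nhds]
  change radialLaplacian n (fun u => g u ^ m / m) r + _ = 0 ↔
    radialLaplacian n U r⁻¹ + _ + _ = 0
  rw [hgU_eq.radialLaplacian_eq, radialLaplacian_rpowInversion hr hU
      (hU2.differentiableAt_deriv isOpen_Ioi hr'), lowerOrder_rpowInversion α β hr hf, hexp,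
    mul_assoc, ← mul_assoc (r ^ γ), hγ, one_mul, ← mul_add, add_assoc,
    mul_eq_zero_iff_left (Real.rpow_pos_of_pos hr _).ne']

theorem inversion_equivalence_general {n : ℕ} {m α β αt βt : ℝ}
    (hm0 : 0 < m)
    (hβt : βt = -β) (hαt : αt = α - (((n : ℝ) - 2) / m) * β)
    {f g : ℝ → ℝ} (hf2 : ContDiffOn ℝ 2 f (Ioi 0))
    (hfpos : ∀ r ∈ Ioi (0 : ℝ), 0 < f r)
    (hg : ∀ r > (0 : ℝ), g r = r ^ (-(((n : ℝ) - 2) / m)) * f (1 / r)) :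
    (∀ r ∈ Ioi (0 : ℝ), pmODE n m α β f r) ↔
    (∀ r ∈ Ioi (0 : ℝ), invODE n m αt βt g r) := by
  subst hβt hαt
  have key (r : ℝ) (hr : 0 < r) :=
    invODE_iff_pmODE_inv (α := α) (β := β) hm0.ne' hf2 hfpos hg hr
  refine ⟨fun hpm r hr => (key r hr).2 (hpm r⁻¹ (mem_Ioi.2 (inv_pos.2 hr))),
    fun hinv s hs => ?_⟩
  simpa using (key s⁻¹ (inv_pos.2 hs)).1 (hinv s⁻¹ (mem_Ioi.2 (inv_pos.2 hs)))

theorem inversion_equivalence {n : ℕ} (hn : 3 ≤ n) {m α β αt βt : ℝ}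
    (hm0 : 0 < m) (hm1 : m < ((n : ℝ) - 2) / n)
    (hβt : βt = -β) (hαt : αt = α - (((n : ℝ) - 2) / m) * β)
    {f g : ℝ → ℝ} (hf2 : ContDiffOn ℝ 2 f (Ioi 0))
    (hfpos : ∀ r ∈ Ioi (0 : ℝ), 0 < f r)
    (hg : ∀ r > (0 : ℝ), g r = r ^ (-(((n : ℝ) - 2) / m)) * f (1 / r)) :
    (∀ r ∈ Ioi (0 : ℝ), pmODE n m α β f r) ↔
    (∀ r ∈ Ioi (0 : ℝ), invODE n m αt βt g r) :=
  inversion_equivalence_general hm0 hβt hαt hf2 hfpos hg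
end

section
/- Let n ≥ 3 be an integer, let 0 < m < (n-2)/(n+1), let η > 0, let α̃ ≠ 0 and β̃ be real numbers, and let r₀ > 0. Let g : [0,r₀) → ℝ be continuously differentiable on [0,r₀), twice continuously differentiable on (0,r₀), positive, satisfying (d²/dr²)(g(r)^m/m) + ((n-1)/r)·(d/dr)(g(r)^m/m) + r^{(n-2-n·m)/m - 2}·(α̃·g(r) + β̃·r·g'(r)) = 0 for all 0 < r < r₀, with g(0) = η and g'(0) = 0. Then lim_{r→0+} r·g'(r) = 0; moreover g'(r) < 0 for all 0 < r < r₀ if α̃ > 0, and g'(r) > 0 for all 0 < r < r₀ if α̃ < 0. -/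
open Set Filter

open Topology

/-!
With `V = (g^m/m)' = g^(m-1) g'`, the equation is the linear first-order equation
`V' + ((n-1)/r + β̃ r^(σ+1) g^(1-m)) V = -α̃ r^σ g`, `σ = (n-2-nm)/m - 2`. Multiplying by the
integrating factor `r^(n-1) exp B`, where `B' = β̃ r^(σ+1) g^(1-m)` (integrable at `0` because
`σ + 1 > 0` exactly when `m < (n-2)/(n+1)`), shows that `Φ = α̃ r^(n-1) V exp B` has derivative
`-α̃² r^(n-1+σ) g exp B < 0`. Since `g'(0) = 0`, `Φ → 0` as `r → 0+`, so `Φ < 0`, i.e. `α̃ g' < 0`.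
-/

theorem tendsto_deriv_nhdsGT_of_contDiffOn_Ico {g : ℝ → ℝ} {a b : ℝ} (hab : a < b)
    (hg : ContDiffOn ℝ 1 g (Ico a b)) :
    Tendsto (deriv g) (𝓝[>] a) (𝓝 (derivWithin g (Ici a) a)) := by
  have hD : ContinuousWithinAt (derivWithin g (Ico a b)) (Ico a b) a :=
    hg.continuousOn_derivWithin (uniqueDiffOn_Ico a b) le_rfl a (left_mem_Ico.2 hab)
  have hDa : derivWithin g (Ico a b) a = derivWithin g (Ici a) a := by
    rw [← Ici_inter_Iio, derivWithin_inter (Iio_mem_nhds hab)]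
  rw [← hDa]
  refine (hD.tendsto.mono_left (nhdsWithin_mono _ Ioo_subset_Ico_self)).congr' ?_ |>.mono_left
    (nhdsWithin_Ioo_eq_nhdsGT hab).ge
  filter_upwards [self_mem_nhdsWithin] with x hx
  exact derivWithin_of_mem_nhds (Ico_mem_nhds hx.1 hx.2)

theorem hasDerivAt_integral_of_continuousOn_Ico {P : ℝ → ℝ} {a b x : ℝ}
    (hP : ContinuousOn P (Ico a b)) (hx : x ∈ Ioo a b) :
    HasDerivAt (fun y => ∫ t in a..y, P t) (P x) x :=
  intervalIntegral.integral_hasDerivAt_right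
    ((hP.mono (by rw [uIcc_of_le hx.1.le]; exact Icc_subset_Ico_right hx.2)).intervalIntegrable)
    ((hP.mono Ioo_subset_Ico_self).stronglyMeasurableAtFilter isOpen_Ioo x hx)
    ((hP x (Ioo_subset_Ico_self hx)).continuousAt (Ico_mem_nhds hx.1 hx.2))

theorem tendsto_integral_nhdsGT_of_continuousOn_Ico {P : ℝ → ℝ} {a b : ℝ} (hab : a < b)
    (hP : ContinuousOn P (Ico a b)) :
    Tendsto (fun y => ∫ t in a..y, P t) (𝓝[>] a) (𝓝 0) := by
  obtain ⟨c, hac, hcb⟩ := exists_between hab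
  have hint : MeasureTheory.IntegrableOn P (uIcc a c) := by
    rw [uIcc_of_le hac.le]
    exact (hP.mono (Icc_subset_Ico_right hcb)).integrableOn_Icc
  have := (intervalIntegral.continuousOn_primitive_interval hint a left_mem_uIcc).tendsto
  rw [intervalIntegral.integral_same] at this
  refine this.mono_left (nhdsWithin_le_of_mem ?_)
  rw [uIcc_of_le hac.le]
  exact mem_nhdsWithin.2 ⟨Iio c, isOpen_Iio, hac, fun y hy => ⟨hy.2.le, hy.1.le⟩⟩

theorem neg_of_hasDerivAt_neg_of_tendsto_nhdsGT {f f' : ℝ → ℝ} {a b x : ℝ}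
    (hf : ∀ y ∈ Ioo a b, HasDerivAt f (f' y) y) (hf' : ∀ y ∈ Ioo a b, f' y < 0)
    (hlim : Tendsto f (𝓝[>] a) (𝓝 0)) (hx : x ∈ Ioo a b) : f x < 0 := by
  have hanti : StrictAntiOn f (Ioo a b) :=
    strictAntiOn_of_hasDerivWithinAt_neg (convex_Ioo a b)
      (fun y hy => (hf y hy).continuousAt.continuousWithinAt)
      (fun y hy => (hf y (interior_subset hy)).hasDerivWithinAt)
      (fun y hy => hf' y (interior_subset hy))
  obtain ⟨y, hay, hyx⟩ := exists_between hx.1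
  have hy : y ∈ Ioo a b := ⟨hay, hyx.trans hx.2⟩
  have hfy : f y ≤ 0 := by
    refine ge_of_tendsto hlim ?_
    filter_upwards [Ioo_mem_nhdsGT hay] with z hz
    exact (hanti ⟨hz.1, hz.2.trans hy.2⟩ hy hz.2).le
  exact (hanti hy hx hyx).trans_le hfy

theorem hasDerivAt_rpow_mul_mul_exp {V B : ℝ → ℝ} {V' P k r : ℝ} (hr : 0 < r)
    (hV : HasDerivAt V V' r) (hB : HasDerivAt B P r) :
    HasDerivAt (fun s => s ^ k * V s * Real.exp (B s))
      (r ^ k * Real.exp (B r) * (V' + (k / r + P) * V r)) r := by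
  refine (((Real.hasDerivAt_rpow_const (p := k) (Or.inl hr.ne')).mul hV).mul hB.exp).congr_deriv ?_
  simp only [Pi.mul_apply]
  rw [Real.rpow_sub_one hr.ne']
  field_simp
  ring

theorem tendsto_rpow_mul_mul_exp_nhdsGT_zero {V B : ℝ → ℝ} {k b : ℝ} (hk : 0 ≤ k)
    (hV : Tendsto V (𝓝[>] 0) (𝓝 0)) (hB : Tendsto B (𝓝[>] 0) (𝓝 b)) :
    Tendsto (fun s => s ^ k * V s * Real.exp (B s)) (𝓝[>] 0) (𝓝 0) := by
  have hpow : Tendsto (fun s : ℝ => s ^ k) (𝓝[>] 0) (𝓝 (0 ^ k)) :=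
    (Real.continuous_rpow_const hk).continuousAt.tendsto.mono_left nhdsWithin_le_nhds
  simpa using (hpow.mul hV).mul hB.rexp

theorem deriv_rpow_div_of_hasDerivAt {g : ℝ → ℝ} {g' m r : ℝ} (hm : m ≠ 0)
    (hg : HasDerivAt g g' r) (hgr : 0 < g r) :
    deriv (fun u => g u ^ m / m) r = g r ^ (m - 1) * g' := by
  rw [((hg.rpow_const (p := m) (Or.inl hgr.ne')).div_const m).deriv]
  field_simp

theorem tendsto_deriv_rpow_div_nhdsGT {g : ℝ → ℝ} {a b m : ℝ} (hab : a < b) (hm : m ≠ 0)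
    (hg : ContDiffOn ℝ 1 g (Ico a b)) (hgpos : ∀ x ∈ Ico a b, 0 < g x) :
    Tendsto (deriv fun u => g u ^ m / m) (𝓝[>] a)
      (𝓝 (g a ^ (m - 1) * derivWithin g (Ici a) a)) := by
  have hga : Tendsto g (𝓝[>] a) (𝓝 (g a)) :=
    (hg.continuousOn a (left_mem_Ico.2 hab)).tendsto.mono_left
      ((nhdsWithin_mono _ Ioi_subset_Ici_self).trans_eq (nhdsWithin_Ico_eq_nhdsGE hab).symm)
  refine ((hga.rpow_const (Or.inl (hgpos a (left_mem_Ico.2 hab)).ne')).mul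
    (tendsto_deriv_nhdsGT_of_contDiffOn_Ico hab hg)).congr' ?_
  filter_upwards [Ioo_mem_nhdsGT hab] with x hx
  have hgx : DifferentiableAt ℝ g x :=
    (hg.differentiableOn one_ne_zero).differentiableAt (Ico_mem_nhds hx.1 hx.2)
  exact (deriv_rpow_div_of_hasDerivAt hm hgx.hasDerivAt (hgpos x (Ioo_subset_Ico_self hx))).symm

noncomputable def invExponent (n : ℕ) (m : ℝ) : ℝ := ((n : ℝ) - 2 - n * m) / m - 2

theorem invODE.deriv_add_mul_eq {n : ℕ} {m αt βt r : ℝ} {g : ℝ → ℝ} (hm : m ≠ 0) (hr : 0 < r)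
    (hgr : 0 < g r) (hg : DifferentiableAt ℝ g r) (h : invODE n m αt βt g r) :
    deriv (deriv fun u => g u ^ m / m) r
      + (((n : ℝ) - 1) / r + βt * r ^ (invExponent n m + 1) * g r ^ (1 - m))
        * deriv (fun u => g u ^ m / m) r
      = -(αt * r ^ invExponent n m * g r) := by
  rw [invODE, ← invExponent] at h
  rw [deriv_rpow_div_of_hasDerivAt hm hg.hasDerivAt hgr] at h ⊢
  have hgm : g r ^ (1 - m) * g r ^ (m - 1) = 1 := by
    rw [← Real.rpow_add hgr]; norm_num
  rw [Real.rpow_add_one hr.ne']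
  linear_combination h + βt * r ^ invExponent n m * r * deriv g r * hgm

theorem invExponent_add_one_pos {n : ℕ} {m : ℝ} (hm0 : 0 < m)
    (hm1 : m < ((n : ℝ) - 2) / ((n : ℝ) + 1)) : 0 < invExponent n m + 1 := by
  have hmn : m * ((n : ℝ) + 1) < (n : ℝ) - 2 := (lt_div_iff₀ (by positivity)).1 hm1
  have : invExponent n m + 1 = ((n : ℝ) - 2 - m * ((n : ℝ) + 1)) / m := by
    rw [invExponent]; field_simp; ring
  rw [this]
  exact div_pos (by linarith) hm0

theorem ContDiffOn.hasDerivAt_deriv {f : ℝ → ℝ} {s : Set ℝ} {x : ℝ} (hf : ContDiffOn ℝ 2 f s)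
    (hs : IsOpen s) (hx : x ∈ s) : HasDerivAt (deriv f) (deriv (deriv f) x) x :=
  (((hf.deriv_of_isOpen hs (m := 1) (by norm_num)).differentiableOn one_ne_zero).differentiableAt
    (hs.mem_nhds hx)).hasDerivAt

theorem mul_deriv_neg_of_invODE {n : ℕ} {m αt βt r₀ r : ℝ} {g : ℝ → ℝ} (hn : 1 ≤ n) (hm0 : 0 < m)
    (hm1 : m < ((n : ℝ) - 2) / ((n : ℝ) + 1)) (hα : αt ≠ 0)
    (hg1 : ContDiffOn ℝ 1 g (Ico 0 r₀)) (hg2 : ContDiffOn ℝ 2 g (Ioo 0 r₀))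
    (hgpos : ∀ x ∈ Ico (0 : ℝ) r₀, 0 < g x) (hode : ∀ x ∈ Ioo (0 : ℝ) r₀, invODE n m αt βt g x)
    (hg0' : derivWithin g (Ici 0) 0 = 0) (hr : r ∈ Ioo 0 r₀) :
    αt * deriv g r < 0 := by
  have hr₀ : 0 < r₀ := hr.1.trans hr.2
  set σ := invExponent n m
  set k : ℝ := (n : ℝ) - 1
  have hk : 0 ≤ k := by simp only [k, sub_nonneg, Nat.one_le_cast, hn]
  set V := deriv fun u => g u ^ m / m
  set P := fun t => βt * t ^ (σ + 1) * g t ^ (1 - m)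
  set B := fun x => ∫ t in (0 : ℝ)..x, P t
  have hP : ContinuousOn P (Ico 0 r₀) :=
    (continuousOn_const.mul
      (Real.continuous_rpow_const (invExponent_add_one_pos hm0 hm1).le).continuousOn).mul
      (hg1.continuousOn.rpow_const fun x hx => Or.inl (hgpos x hx).ne')
  have hg' : ∀ x ∈ Ioo (0 : ℝ) r₀, DifferentiableAt ℝ g x := fun x hx =>
    (hg2.differentiableOn two_ne_zero).differentiableAt (isOpen_Ioo.mem_nhds hx)
  have hgm : ContDiffOn ℝ 2 (fun u => g u ^ m / m) (Ioo 0 r₀) :=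
    (hg2.rpow_const_of_ne fun x hx => (hgpos x (Ioo_subset_Ico_self hx)).ne').div_const m
  set Φ := fun s => αt * (s ^ k * V s * Real.exp (B s))
  have hΦ' : ∀ x ∈ Ioo (0 : ℝ) r₀,
      HasDerivAt Φ (-(αt ^ 2 * (x ^ k * Real.exp (B x) * x ^ σ * g x))) x := by
    intro x hx
    refine ((hasDerivAt_rpow_mul_mul_exp hx.1 (hgm.hasDerivAt_deriv isOpen_Ioo hx)
      (hasDerivAt_integral_of_continuousOn_Ico hP hx)).const_mul αt).congr_deriv ?_
    rw [invODE.deriv_add_mul_eq hm0.ne' hx.1 (hgpos x (Ioo_subset_Ico_self hx)) (hg' x hx) (hode x hx)]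
    ring
  have hΦlim : Tendsto Φ (𝓝[>] 0) (𝓝 0) := by
    have hV0 := tendsto_deriv_rpow_div_nhdsGT hr₀ hm0.ne' hg1 hgpos
    rw [hg0', mul_zero] at hV0
    simpa only [mul_zero] using (tendsto_rpow_mul_mul_exp_nhdsGT_zero hk hV0
      (tendsto_integral_nhdsGT_of_continuousOn_Ico hr₀ hP)).const_mul αt
  have hΦr : Φ r < 0 :=
    neg_of_hasDerivAt_neg_of_tendsto_nhdsGT hΦ' (fun x hx => by
      have := hgpos x (Ioo_subset_Ico_self hx); have := hx.1; exact neg_neg_of_pos (by positivity))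
      hΦlim hr
  simp only [Φ] at hΦr
  have hVr : V r = g r ^ (m - 1) * deriv g r :=
    deriv_rpow_div_of_hasDerivAt hm0.ne' (hg' r hr).hasDerivAt (hgpos r (Ioo_subset_Ico_self hr))
  rw [hVr] at hΦr
  have : 0 < r ^ k * g r ^ (m - 1) * Real.exp (B r) := by
    have := hgpos r (Ioo_subset_Ico_self hr); have := hr.1; positivity
  nlinarith

theorem g_derivative_sign_m_small_general {n : ℕ} (hn : 3 ≤ n) {m αt βt r₀ : ℝ}
    (hm0 : 0 < m) (hm1 : m < ((n : ℝ) - 2) / ((n : ℝ) + 1))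
    (hr₀ : 0 < r₀) {g : ℝ → ℝ}
    (hg1 : ContDiffOn ℝ 1 g (Ico 0 r₀)) (hg2 : ContDiffOn ℝ 2 g (Ioo 0 r₀))
    (hgpos : ∀ r ∈ Ico (0 : ℝ) r₀, 0 < g r)
    (hode : ∀ r ∈ Ioo (0 : ℝ) r₀, invODE n m αt βt g r)
    (hg0' : derivWithin g (Ici 0) 0 = 0) :
    Tendsto (fun r : ℝ => r * deriv g r) (nhdsWithin 0 (Ioi 0)) (nhds 0) ∧
    (0 < αt → ∀ r : ℝ, 0 < r → r < r₀ → deriv g r < 0) ∧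
    (αt < 0 → ∀ r : ℝ, 0 < r → r < r₀ → 0 < deriv g r) := by
  have hsign : αt ≠ 0 → ∀ r ∈ Ioo 0 r₀, αt * deriv g r < 0 := fun hα _ hr =>
    mul_deriv_neg_of_invODE (by omega) hm0 hm1 hα hg1 hg2 hgpos hode hg0' hr
  refine ⟨?_, fun hα r hr0 hr => ?_, fun hα r hr0 hr => ?_⟩
  · have hg' := tendsto_deriv_nhdsGT_of_contDiffOn_Ico hr₀ hg1
    rw [hg0'] at hg'
    simpa using (tendsto_id.mono_left nhdsWithin_le_nhds).mul hg'
  · nlinarith [hsign hα.ne' r ⟨hr0, hr⟩]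
  · nlinarith [hsign hα.ne r ⟨hr0, hr⟩]

theorem g_derivative_sign_m_small {n : ℕ} (hn : 3 ≤ n) {m αt βt η r₀ : ℝ}
    (hm0 : 0 < m) (hm1 : m < ((n : ℝ) - 2) / ((n : ℝ) + 1)) (hη : 0 < η)
    (hαt : αt ≠ 0) (hr₀ : 0 < r₀) {g : ℝ → ℝ}
    (hg1 : ContDiffOn ℝ 1 g (Ico 0 r₀)) (hg2 : ContDiffOn ℝ 2 g (Ioo 0 r₀))
    (hgpos : ∀ r ∈ Ico (0 : ℝ) r₀, 0 < g r)
    (hode : ∀ r ∈ Ioo (0 : ℝ) r₀, invODE n m αt βt g r)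
    (hg0 : g 0 = η) (hg0' : derivWithin g (Ici 0) 0 = 0) :
    Tendsto (fun r : ℝ => r * deriv g r) (nhdsWithin 0 (Ioi 0)) (nhds 0) ∧
    (0 < αt → ∀ r : ℝ, 0 < r → r < r₀ → deriv g r < 0) ∧
    (αt < 0 → ∀ r : ℝ, 0 < r → r < r₀ → 0 < deriv g r) :=
  g_derivative_sign_m_small_general hn hm0 hm1 hr₀ hg1 hg2 hgpos hode hg0'
end

section
/- Let n ≥ 3 be an integer, let 0 < m < (n-2)/n, η > 0, and let α̃, β̃ be real numbers with α̃ > 0, β̃ ≠ 0 and α̃/β̃ ≤ (n-2)/m. Let g : [0,∞) → ℝ be continuous on [0,∞), twice continuously differentiable on (0,∞), positive, satisfying (d²/dr²)(g(r)^m/m) + ((n-1)/r)·(d/dr)(g(r)^m/m) + r^{(n-2-n·m)/m - 2}·(α̃·g(r) + β̃·r·g'(r)) = 0 for all r > 0, with g(0) = η and lim_{r→0+} r·g'(r) = 0. Then α̃·g(r) + β̃·r·g'(r) > 0 for all r > 0. -/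
open Set Filter

/-!
Write `V = α̃ g + β̃ r g'` for the source term of the equation. Eliminating `g''` with the
equation turns it into the linear equation `V' = L V + k α̃ g / r` with `L = invODERate`
continuous on `(0, ∞)` and `k = n - 2 - m α̃ / β̃ ≥ 0`, which is exactly the hypothesis `α̃ / β̃ ≤ (n - 2) / m`.
So `V · exp (-∫ L)` is nondecreasing, and as `V → α̃ η > 0` at `0⁺`, `V` stays positive.
-/

open Topology

theorem pos_of_hasDerivAt_mul_add_nonneg {V L c : ℝ → ℝ} {a b : ℝ} (hab : a ≤ b)
    (hL : ContinuousOn L (Icc a b)) (hV : ContinuousOn V (Icc a b))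
    (hV' : ∀ x ∈ Ioo a b, HasDerivAt V (L x * V x + c x) x)
    (hc : ∀ x ∈ Ioo a b, 0 ≤ c x) (ha : 0 < V a) : 0 < V b := by
  set Φ : ℝ → ℝ := fun x => ∫ t in a..x, L t
  have hΦ : ContinuousOn Φ (Icc a b) := by
    have := intervalIntegral.continuousOn_primitive_interval (μ := MeasureTheory.volume)
      (a := a) (b := b) (uIcc_of_le hab ▸ hL.integrableOn_Icc)
    rwa [uIcc_of_le hab] at this
  have hΦ' : ∀ x ∈ Ioo a b, HasDerivAt Φ (L x) x := fun x hx =>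
    intervalIntegral.integral_hasDerivAt_right
      ((hL.mono (Icc_subset_Icc_right hx.2.le)).intervalIntegrable_of_Icc hx.1.le)
      ((hL.mono Ioo_subset_Icc_self).stronglyMeasurableAtFilter isOpen_Ioo x hx)
      (hL.continuousAt (Icc_mem_nhds hx.1 hx.2))
  have hmono : MonotoneOn (fun x => V x * Real.exp (-Φ x)) (Icc a b) := by
    refine monotoneOn_of_hasDerivWithinAt_nonneg (f' := fun x => c x * Real.exp (-Φ x))
      (convex_Icc a b) (hV.mul hΦ.neg.rexp) (fun x hx => ?_) (fun x hx => ?_) <;>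
      rw [interior_Icc] at hx
    · refine (((hV' x hx).mul (hΦ' x hx).neg.exp).congr_deriv ?_).hasDerivWithinAt
      simp only [Pi.neg_apply]
      ring
    · exact mul_nonneg (hc x hx) (Real.exp_pos _).le
  have hVb := hmono (left_mem_Icc.2 hab) (right_mem_Icc.2 hab) hab
  simp only [Φ, intervalIntegral.integral_same, neg_zero, Real.exp_zero, mul_one] at hVb
  exact pos_of_mul_pos_left (ha.trans_le hVb) (Real.exp_pos _).le

theorem hasDerivAt_rpow_div {g : ℝ → ℝ} {g' m r : ℝ} (hg : HasDerivAt g g' r) (hpos : 0 < g r)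
    (hm : m ≠ 0) : HasDerivAt (fun u => g u ^ m / m) (g r ^ (m - 1) * g') r :=
  ((hg.rpow_const (Or.inl hpos.ne')).div_const m).congr_deriv (by field_simp)

theorem deriv_deriv_rpow_div {g : ℝ → ℝ} {s : Set ℝ} {m r : ℝ} (hs : IsOpen s)
    (hg : ContDiffOn ℝ 2 g s) (hpos : ∀ x ∈ s, 0 < g x) (hm : m ≠ 0) (hr : r ∈ s) :
    deriv (deriv (fun u => g u ^ m / m)) r
      = (m - 1) * g r ^ (m - 2) * deriv g r ^ 2 + g r ^ (m - 1) * deriv (deriv g) r := by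
  have hg' : ∀ x ∈ s, HasDerivAt g (deriv g x) x := fun x hx =>
    ((hg.differentiableOn two_ne_zero).differentiableAt (hs.mem_nhds hx)).hasDerivAt
  have hg'' : HasDerivAt (deriv g) (deriv (deriv g) r) r :=
    (((hg.deriv_of_isOpen hs (by norm_num)).differentiableOn one_ne_zero).differentiableAt
      (hs.mem_nhds hr)).hasDerivAt
  have hw : deriv (fun u => g u ^ m / m) =ᶠ[𝓝 r] fun u => g u ^ (m - 1) * deriv g u := by
    filter_upwards [hs.mem_nhds hr] with x hx
    exact (hasDerivAt_rpow_div (hg' x hx) (hpos x hx) hm).deriv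
  rw [hw.deriv_eq, ((hg' r hr).rpow_const (Or.inl (hpos r hr).ne') |>.fun_mul hg'').deriv,
    show m - 1 - 1 = m - 2 by ring]
  ring

noncomputable def invODERate (n : ℕ) (m αt βt : ℝ) (g : ℝ → ℝ) (r : ℝ) : ℝ :=
  -((n : ℝ) - 2 - m * αt / βt) / r + (1 - m) * deriv g r / g r
    - βt * r ^ (((n : ℝ) - 2 - n * m) / m - 1) / g r ^ (m - 1)

theorem invODE.hasDerivAt_source {n : ℕ} {m αt βt : ℝ} {g : ℝ → ℝ} {r : ℝ} (hm : m ≠ 0)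
    (hβt : βt ≠ 0) (hg : ContDiffOn ℝ 2 g (Ioi 0)) (hpos : ∀ x ∈ Ioi 0, 0 < g x) (hr : 0 < r)
    (hode : invODE n m αt βt g r) :
    HasDerivAt (fun x => αt * g x + βt * x * deriv g x)
      (invODERate n m αt βt g r * (αt * g r + βt * r * deriv g r)
        + ((n : ℝ) - 2 - m * αt / βt) * αt * g r / r) r := by
  have hg' : HasDerivAt g (deriv g r) r :=
    ((hg.differentiableOn two_ne_zero).differentiableAt (Ioi_mem_nhds hr)).hasDerivAt
  have hg'' : HasDerivAt (deriv g) (deriv (deriv g) r) r :=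
    (((hg.deriv_of_isOpen isOpen_Ioi (by norm_num)).differentiableOn one_ne_zero).differentiableAt
      (Ioi_mem_nhds hr)).hasDerivAt
  refine ((hg'.const_mul αt).fun_add
    (((hasDerivAt_id' r).const_mul βt).fun_mul hg'')).congr_deriv ?_
  have hgr := hpos r hr
  rw [invODE, deriv_deriv_rpow_div isOpen_Ioi hg hpos hm hr,
    (hasDerivAt_rpow_div hg' hgr hm).deriv] at hode
  have hpow : g r ^ (m - 1) = g r ^ (m - 2) * g r := by
    rw [← Real.rpow_add_one hgr.ne']; ring_nf
  have hpow' : r ^ (((n : ℝ) - 2 - n * m) / m - 1)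
      = r ^ (((n : ℝ) - 2 - n * m) / m - 2) * r := by
    rw [← Real.rpow_add_one hr.ne']; ring_nf
  have hP := Real.rpow_pos_of_pos hgr (m - 2)
  rw [hpow] at hode
  rw [invODERate, hpow, hpow']
  generalize g r ^ (m - 2) = P at *
  generalize r ^ (((n : ℝ) - 2 - n * m) / m - 2) = S at *
  -- the equation, divided by `g^(m-1) = P g`, expresses `g''`
  linear_combination (norm := skip) (βt * r / (P * g r)) * hode
  field_simp
  ring

theorem continuousOn_invODERate {n : ℕ} {m αt βt : ℝ} {g : ℝ → ℝ}
    (hg : ContDiffOn ℝ 1 g (Ioi 0)) (hpos : ∀ x ∈ Ioi 0, 0 < g x) :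
    ContinuousOn (invODERate n m αt βt g) (Ioi 0) := by
  have hg0 : ContinuousOn g (Ioi 0) := hg.continuousOn
  have hg1 : ContinuousOn (deriv g) (Ioi 0) := hg.continuousOn_deriv_of_isOpen isOpen_Ioi le_rfl
  have hr : ∀ x ∈ Ioi (0 : ℝ), x ≠ 0 := fun x hx => ne_of_gt hx
  exact ((continuousOn_const.div continuousOn_id hr).add
    ((continuousOn_const.mul hg1).div hg0 fun x hx => (hpos x hx).ne')).sub
    ((continuousOn_const.mul (continuousOn_id.rpow_const fun x hx => Or.inl (hr x hx))).div
      (hg0.rpow_const fun x hx => Or.inl (hpos x hx).ne')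
      fun x hx => (Real.rpow_pos_of_pos (hpos x hx) _).ne')

theorem v_derivative_general {n : ℕ} {m αt βt η : ℝ}
    (hm0 : 0 < m) (hη : 0 < η)
    (hαt : 0 < αt) (hβt : βt ≠ 0) (hratio : αt / βt ≤ ((n : ℝ) - 2) / m)
    {g : ℝ → ℝ} (hgc : ContinuousOn g (Ici 0)) (hg2 : ContDiffOn ℝ 2 g (Ioi 0))
    (hgpos : ∀ r ∈ Ici (0 : ℝ), 0 < g r)
    (hode : ∀ r ∈ Ioi (0 : ℝ), invODE n m αt βt g r)
    (hg0 : g 0 = η)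
    (hg0' : Tendsto (fun r : ℝ => r * deriv g r) (nhdsWithin 0 (Ioi 0)) (nhds 0)) :
    ∀ r > (0 : ℝ), 0 < αt * g r + βt * r * deriv g r := by
  have hpos : ∀ x ∈ Ioi (0 : ℝ), 0 < g x := fun x hx => hgpos x (mem_Ici.2 (le_of_lt hx))
  have hV' := fun x (hx : x ∈ Ioi (0 : ℝ)) =>
    (hode x hx).hasDerivAt_source hm0.ne' hβt hg2 hpos hx
  have hk : 0 ≤ (n : ℝ) - 2 - m * αt / βt := by
    rw [le_div_iff₀' hm0] at hratio
    rw [mul_div_assoc]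
    linarith
  have hVlim : Tendsto (fun x => αt * g x + βt * x * deriv g x) (𝓝[>] 0) (𝓝 (αt * η)) := by
    have hglim : Tendsto g (𝓝[>] 0) (𝓝 η) :=
      hg0 ▸ ((hgc 0 self_mem_Ici).mono Ioi_subset_Ici_self).tendsto
    simpa [mul_assoc] using (hglim.const_mul αt).add (hg0'.const_mul βt)
  intro r hr
  obtain ⟨a, hVa, ha0, har⟩ :=
    ((hVlim.eventually (lt_mem_nhds (by positivity))).and (Ioo_mem_nhdsGT hr)).exists
  have hIcc : Icc a r ⊆ Ioi 0 := fun x hx => ha0.trans_le hx.1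
  refine pos_of_hasDerivAt_mul_add_nonneg (V := fun x => αt * g x + βt * x * deriv g x) har.le
    ((continuousOn_invODERate (hg2.of_le one_le_two) hpos).mono hIcc)
    (fun x hx => (hV' x (hIcc hx)).continuousAt.continuousWithinAt)
    (fun x hx => hV' x (hIcc (Ioo_subset_Icc_self hx))) (fun x hx => ?_) hVa
  have hx : 0 < x := ha0.trans hx.1
  exact div_nonneg (mul_nonneg (mul_nonneg hk hαt.le) (hpos x hx).le) hx.le

theorem v_derivative {n : ℕ} (hn : 3 ≤ n) {m αt βt η : ℝ}
    (hm0 : 0 < m) (hm1 : m < ((n : ℝ) - 2) / n) (hη : 0 < η)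
    (hαt : 0 < αt) (hβt : βt ≠ 0) (hratio : αt / βt ≤ ((n : ℝ) - 2) / m)
    {g : ℝ → ℝ} (hgc : ContinuousOn g (Ici 0)) (hg2 : ContDiffOn ℝ 2 g (Ioi 0))
    (hgpos : ∀ r ∈ Ici (0 : ℝ), 0 < g r)
    (hode : ∀ r ∈ Ioi (0 : ℝ), invODE n m αt βt g r)
    (hg0 : g 0 = η)
    (hg0' : Tendsto (fun r : ℝ => r * deriv g r) (nhdsWithin 0 (Ioi 0)) (nhds 0)) :
    ∀ r > (0 : ℝ), 0 < αt * g r + βt * r * deriv g r :=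
  v_derivative_general hm0 hη hαt hβt hratio hgc hg2 hgpos hode hg0 hg0'
end

section
/- Let n ≥ 3 be an integer, let 0 < m < (n-2)/n, η > 0, ρ₁ > 0, let β be a real number with β < m·ρ₁/(n-2-n·m), and set α = (2β+ρ₁)/(1-m). Let f be a positive twice continuously differentiable function on (0,∞) satisfying (d²/dr²)(f(r)^m/m) + ((n-1)/r)·(d/dr)(f(r)^m/m) + α·f(r) + β·r·f'(r) = 0 for all r > 0, lim_{r→∞} r^{(n-2)/m}·f(r) = η, and lim_{r→∞} r^{(n-2)/m + 1}·f'(r) = -((n-2)/m)·η. Then either f'(r) < 0 for all r > 0, or there exists r₀ > 0 such that f'(r) > 0 for 0 < r < r₀, f'(r₀) = 0, and f'(r) < 0 for all r > r₀. -/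
/-!
Write `g = f^m/m`. The equation says that the flux `H = r^{n-1} g'` satisfies
`H' = -α r^{n-1} f - β r f^{1-m} H`, so the integrating factor `E = exp ∫₁ʳ β s f(s)^{1-m} ds`
turns it into `(H E)' = -α r^{n-1} f E`. Hence the weighted flux `G = H E`, which has the sign
of `f'`, is monotone in `r`: nondecreasing if `α ≤ 0`, strictly decreasing if `α > 0`. Since
`f' < 0` for large `r` by the asymptotics of `f'`, a nondecreasing `G` is negative everywhere,
and a strictly decreasing `G` is either negative everywhere or changes sign exactly once.
-/

open Set Filter

open Real Topology

def NegOrChangesSignOnce (D : ℝ → ℝ) : Prop :=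
  (∀ r > (0 : ℝ), D r < 0) ∨
    (∃ r₀ > (0 : ℝ), (∀ r : ℝ, 0 < r → r < r₀ → 0 < D r) ∧ D r₀ = 0 ∧ (∀ r > r₀, D r < 0))

theorem NegOrChangesSignOnce.of_eq_pos_mul {G P D : ℝ → ℝ} (hP : ∀ r > (0 : ℝ), 0 < P r)
    (hG : ∀ r > (0 : ℝ), G r = P r * D r) (h : NegOrChangesSignOnce G) :
    NegOrChangesSignOnce D := by
  have hneg : ∀ r > (0 : ℝ), G r < 0 → D r < 0 := fun r hr h =>
    neg_of_mul_neg_right (hG r hr ▸ h) (hP r hr).le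
  rcases h with hall | ⟨r₀, hr₀, hbefore, hzero, hafter⟩
  · exact Or.inl fun r hr => hneg r hr (hall r hr)
  · refine Or.inr ⟨r₀, hr₀, fun r hr hrr => ?_, ?_,
      fun r hr => hneg r (hr₀.trans hr) (hafter r hr)⟩
    · exact pos_of_mul_pos_right (hG r hr ▸ hbefore r hr hrr) (hP r hr).le
    · exact (mul_eq_zero.1 (hG r₀ hr₀ ▸ hzero)).resolve_left (hP r₀ hr₀).ne'

theorem MonotoneOn.neg_of_eventually_neg {G : ℝ → ℝ} (hG : MonotoneOn G (Ioi 0))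
    (hev : ∀ᶠ r in atTop, G r < 0) : ∀ r > (0 : ℝ), G r < 0 := by
  intro r hr
  obtain ⟨R, hR⟩ := eventually_atTop.1 hev
  exact (hG hr (hr.trans_le (le_max_left r R)) (le_max_left r R)).trans_lt
    (hR _ (le_max_right r R))

theorem StrictAntiOn.negOrChangesSignOnce {G : ℝ → ℝ} (hc : ContinuousOn G (Ioi 0))
    (hG : StrictAntiOn G (Ioi 0)) (hev : ∀ᶠ r in atTop, G r < 0) : NegOrChangesSignOnce G := by
  by_cases hneg : ∀ r > (0 : ℝ), G r < 0
  · exact Or.inl hneg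
  push Not at hneg
  obtain ⟨s, hs, hGs⟩ := hneg
  obtain ⟨t, hGt, hst⟩ := (hev.and (eventually_gt_atTop s)).exists
  obtain ⟨r₀, ⟨hsr₀, -⟩, hr₀⟩ :=
    intermediate_value_Icc' hst.le (hc.mono fun x hx => hs.trans_le hx.1) ⟨hGt.le, hGs⟩
  have hr₀pos : 0 < r₀ := hs.trans_le hsr₀
  exact Or.inr ⟨r₀, hr₀pos, fun r hr hrr => hr₀ ▸ hG hr hr₀pos hrr, hr₀,
    fun r hr => hr₀ ▸ hG hr₀pos (hr₀pos.trans hr) hr⟩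

theorem NegOrChangesSignOnce.of_hasDerivAt {G q : ℝ → ℝ} {α : ℝ}
    (hG : ∀ r ∈ Ioi (0 : ℝ), HasDerivAt G (-α * q r) r) (hq : ∀ r ∈ Ioi (0 : ℝ), 0 < q r)
    (hev : ∀ᶠ r in atTop, G r < 0) : NegOrChangesSignOnce G := by
  have hc : ContinuousOn G (Ioi 0) := fun r hr => (hG r hr).continuousAt.continuousWithinAt
  have hG' : ∀ r ∈ interior (Ioi (0 : ℝ)), HasDerivWithinAt G (-α * q r) (interior (Ioi 0)) r :=
    fun r hr => (hG r (interior_subset hr)).hasDerivWithinAt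
  rcases le_or_gt α 0 with hα | hα
  · refine Or.inl (MonotoneOn.neg_of_eventually_neg ?_ hev)
    exact monotoneOn_of_hasDerivWithinAt_nonneg (convex_Ioi 0) hc hG' fun r hr =>
      mul_nonneg (neg_nonneg.2 hα) (hq r (interior_subset hr)).le
  · refine StrictAntiOn.negOrChangesSignOnce hc ?_ hev
    exact strictAntiOn_of_hasDerivWithinAt_neg (convex_Ioi 0) hc hG' fun r hr =>
      mul_neg_of_neg_of_pos (neg_neg_of_pos hα) (hq r (interior_subset hr))

theorem eventually_neg_of_tendsto_rpow_mul {D : ℝ → ℝ} {p L : ℝ}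
    (hlim : Tendsto (fun r => r ^ p * D r) atTop (𝓝 L)) (hL : L < 0) :
    ∀ᶠ r in atTop, D r < 0 := by
  filter_upwards [hlim.eventually (Iio_mem_nhds hL), eventually_gt_atTop 0] with r hneg hr
  exact neg_of_mul_neg_right hneg (rpow_nonneg hr.le p)

noncomputable def integratingFactor (c : ℝ → ℝ) (r : ℝ) : ℝ :=
  exp (∫ s in (1 : ℝ)..r, c s)

theorem hasDerivAt_integratingFactor {c : ℝ → ℝ} (hc : ContinuousOn c (Ioi 0)) {r : ℝ}
    (hr : 0 < r) : HasDerivAt (integratingFactor c) (c r * integratingFactor c r) r := by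
  have hsub : uIcc 1 r ⊆ Ioi 0 := fun x hx => lt_of_lt_of_le (lt_min one_pos hr) hx.1
  have hint := intervalIntegral.integral_hasDerivAt_right ((hc.mono hsub).intervalIntegrable)
    (hc.stronglyMeasurableAtFilter isOpen_Ioi r hr) (hc.continuousAt (Ioi_mem_nhds hr))
  exact hint.exp.congr_deriv (mul_comm _ _)

theorem HasDerivAt.mul_integratingFactor {H c : ℝ → ℝ} {a r : ℝ} (hc : ContinuousOn c (Ioi 0))
    (hr : 0 < r) (hH : HasDerivAt H (a - c r * H r) r) :
    HasDerivAt (fun x => H x * integratingFactor c x) (a * integratingFactor c r) r :=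
  (hH.mul (hasDerivAt_integratingFactor hc hr)).congr_deriv (by ring)

theorem hasDerivAt_rpow_mul_deriv {g : ℝ → ℝ} (p : ℝ) {r : ℝ} (hr : 0 < r)
    (hg : DifferentiableAt ℝ (deriv g) r) :
    HasDerivAt (fun x => x ^ p * deriv g x)
      (r ^ p * (deriv (deriv g) r + p / r * deriv g r)) r := by
  refine ((hasDerivAt_rpow_const (p := p) (Or.inl hr.ne')).mul hg.hasDerivAt).congr_deriv ?_
  rw [rpow_sub_one hr.ne']
  field_simp
  ring

theorem HasDerivAt.rpow_const_div_self {f : ℝ → ℝ} {f' m r : ℝ} (hf : HasDerivAt f f' r)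
    (hpos : 0 < f r) (hm : m ≠ 0) :
    HasDerivAt (fun u => f u ^ m / m) (f r ^ (m - 1) * f') r := by
  refine ((hf.rpow_const (p := m) (Or.inl hpos.ne')).div_const m).congr_deriv ?_
  field_simp

theorem pmODE.hasDerivAt_flux {n : ℕ} {m α β : ℝ} {f : ℝ → ℝ} {r : ℝ}
    (h : pmODE n m α β f r) (hr : 0 < r) (hg : DifferentiableAt ℝ (deriv fun u => f u ^ m / m) r) :
    HasDerivAt (fun x => x ^ ((n : ℝ) - 1) * deriv (fun u => f u ^ m / m) x)
      (-(r ^ ((n : ℝ) - 1) * (α * f r + β * r * deriv f r))) r := by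
  refine (hasDerivAt_rpow_mul_deriv _ hr hg).congr_deriv ?_
  rw [pmODE] at h
  linear_combination r ^ ((n : ℝ) - 1) * h

noncomputable def weightedFlux (n : ℕ) (m β : ℝ) (f : ℝ → ℝ) (r : ℝ) : ℝ :=
  r ^ ((n : ℝ) - 1) * deriv (fun u => f u ^ m / m) r *
    integratingFactor (fun s => β * s * f s ^ (1 - m)) r

section WeightedFlux

variable {n : ℕ} {m α β : ℝ} {f : ℝ → ℝ}

theorem weightedFlux_eq_mul_deriv (hm : m ≠ 0) {r : ℝ} (hf : DifferentiableAt ℝ f r)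
    (hpos : 0 < f r) :
    weightedFlux n m β f r =
      r ^ ((n : ℝ) - 1) * f r ^ (m - 1) * integratingFactor (fun s => β * s * f s ^ (1 - m)) r *
        deriv f r := by
  rw [weightedFlux, (hf.hasDerivAt.rpow_const_div_self hpos hm).deriv]
  ring

theorem hasDerivAt_weightedFlux (hm : m ≠ 0) (hf2 : ContDiffOn ℝ 2 f (Ioi 0))
    (hfpos : ∀ r ∈ Ioi (0 : ℝ), 0 < f r) (hode : ∀ r ∈ Ioi (0 : ℝ), pmODE n m α β f r)
    {r : ℝ} (hr : 0 < r) :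
    HasDerivAt (weightedFlux n m β f)
      (-α * (r ^ ((n : ℝ) - 1) * f r * integratingFactor (fun s => β * s * f s ^ (1 - m)) r))
      r := by
  have hf : HasDerivAt f (deriv f r) r :=
    ((hf2.differentiableOn (by norm_num)).differentiableAt (isOpen_Ioi.mem_nhds hr)).hasDerivAt
  have hg : ContDiffOn ℝ 2 (fun u => f u ^ m / m) (Ioi 0) :=
    (hf2.rpow_const_of_ne fun x hx => (hfpos x hx).ne').div_const m
  have hg' : DifferentiableAt ℝ (deriv fun u => f u ^ m / m) r :=
    ((hg.deriv_of_isOpen isOpen_Ioi (by norm_num)).differentiableOn one_ne_zero).differentiableAt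
      (isOpen_Ioi.mem_nhds hr)
  have hc : ContinuousOn (fun s => β * s * f s ^ (1 - m)) (Ioi 0) :=
    (continuousOn_const.mul continuousOn_id).mul
      (hf2.continuousOn.rpow_const fun x hx => Or.inl (hfpos x hx).ne')
  have hinv : f r ^ (1 - m) * f r ^ (m - 1) = 1 := by
    rw [← rpow_add (hfpos r hr)]
    norm_num
  have hflux : HasDerivAt (fun x => x ^ ((n : ℝ) - 1) * deriv (fun u => f u ^ m / m) x)
      (-α * (r ^ ((n : ℝ) - 1) * f r) -
        β * r * f r ^ (1 - m) * (r ^ ((n : ℝ) - 1) * deriv (fun u => f u ^ m / m) r)) r := by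
    refine ((hode r hr).hasDerivAt_flux hr hg').congr_deriv ?_
    rw [(hf.rpow_const_div_self (hfpos r hr) hm).deriv]
    linear_combination (β * r * r ^ ((n : ℝ) - 1) * deriv f r) * hinv
  exact (hflux.mul_integratingFactor hc hr).congr_deriv (by ring)

end WeightedFlux

theorem f_derivative_dichotomy_general {n : ℕ} (hn : 3 ≤ n) {m η β α : ℝ}
    (hm0 : 0 < m) (hη : 0 < η)
    {f : ℝ → ℝ} (hf2 : ContDiffOn ℝ 2 f (Ioi 0))
    (hfpos : ∀ r ∈ Ioi (0 : ℝ), 0 < f r)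
    (hode : ∀ r ∈ Ioi (0 : ℝ), pmODE n m α β f r)
    (hflim' : Tendsto (fun r : ℝ => r ^ (((n : ℝ) - 2) / m + 1) * deriv f r) atTop
      (nhds (-(((n : ℝ) - 2) / m) * η))) :
    (∀ r > (0 : ℝ), deriv f r < 0) ∨
    (∃ r₀ > (0 : ℝ), (∀ r : ℝ, 0 < r → r < r₀ → 0 < deriv f r) ∧
      deriv f r₀ = 0 ∧ (∀ r > r₀, deriv f r < 0)) := by
  set E := integratingFactor fun s => β * s * f s ^ (1 - m)
  have hP : ∀ r > (0 : ℝ), 0 < r ^ ((n : ℝ) - 1) * f r ^ (m - 1) * E r := fun r hr =>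
    mul_pos (mul_pos (rpow_pos_of_pos hr _) (rpow_pos_of_pos (hfpos r hr) _)) (exp_pos _)
  have hGD : ∀ r > (0 : ℝ), weightedFlux n m β f r =
      r ^ ((n : ℝ) - 1) * f r ^ (m - 1) * E r * deriv f r := fun r hr =>
    weightedFlux_eq_mul_deriv hm0.ne'
      ((hf2.differentiableOn (by norm_num)).differentiableAt (isOpen_Ioi.mem_nhds hr)) (hfpos r hr)
  have hL : -(((n : ℝ) - 2) / m) * η < 0 := by
    have hn' : (3 : ℝ) ≤ n := by exact_mod_cast hn
    exact mul_neg_of_neg_of_pos (neg_neg_of_pos (div_pos (by linarith) hm0)) hη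
  have hGev : ∀ᶠ r in atTop, weightedFlux n m β f r < 0 := by
    filter_upwards [eventually_neg_of_tendsto_rpow_mul hflim' hL, eventually_gt_atTop 0]
      with r hr hr0
    rw [hGD r hr0]
    exact mul_neg_of_pos_of_neg (hP r hr0) hr
  refine NegOrChangesSignOnce.of_eq_pos_mul hP hGD ?_
  refine NegOrChangesSignOnce.of_hasDerivAt
    (fun r hr => hasDerivAt_weightedFlux hm0.ne' hf2 hfpos hode hr) (fun r hr => ?_) hGev
  exact mul_pos (mul_pos (rpow_pos_of_pos hr _) (hfpos r hr)) (exp_pos _)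

theorem f_derivative_dichotomy {n : ℕ} (hn : 3 ≤ n) {m η ρ₁ β α : ℝ}
    (hm0 : 0 < m) (hm1 : m < ((n : ℝ) - 2) / n) (hη : 0 < η) (hρ₁ : 0 < ρ₁)
    (hβ : β < m * ρ₁ / ((n : ℝ) - 2 - n * m))
    (hα : α = (2 * β + ρ₁) / (1 - m))
    {f : ℝ → ℝ} (hf2 : ContDiffOn ℝ 2 f (Ioi 0))
    (hfpos : ∀ r ∈ Ioi (0 : ℝ), 0 < f r)
    (hode : ∀ r ∈ Ioi (0 : ℝ), pmODE n m α β f r)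
    (hflim : Tendsto (fun r : ℝ => r ^ (((n : ℝ) - 2) / m) * f r) atTop (nhds η))
    (hflim' : Tendsto (fun r : ℝ => r ^ (((n : ℝ) - 2) / m + 1) * deriv f r) atTop
      (nhds (-(((n : ℝ) - 2) / m) * η))) :
    (∀ r > (0 : ℝ), deriv f r < 0) ∨
    (∃ r₀ > (0 : ℝ), (∀ r : ℝ, 0 < r → r < r₀ → 0 < deriv f r) ∧
      deriv f r₀ = 0 ∧ (∀ r > r₀, deriv f r < 0)) :=
  f_derivative_dichotomy_general hn hm0 hη hf2 hfpos hode hflim'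
end
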